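/- An oriented hypergraph G^σ is incidence balanced if and only if its signed incidence graph IG^σ — the bipartite graph on V(G) ∪ E(G) with an edge for each incidence (e,v), signed by σ(e,v) — is a balanced signed graph (every cycle has positive sign product). -/

import Mathlib

open Matrix BigOperators

variable {V E : Type*}

/-- `M` is the signed edge-vertex incidence matrix of an incidence orientation of the
hypergraph whose incidence relation is `mem` (`mem e v` means `v ∈ e`). -/
def IsOrientation (mem : E → V → Prop) (M : Matrix E V ℝ) : Prop :=
  ∀ e v, (mem e v → M e v = 1 ∨ M e v = -1) ∧ (¬ mem e v → M e v = 0)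

/-- The incidence matrix of the all-positive orientation `G⁺`. -/
def Mplus (mem : E → V → Prop) [∀ e v, Decidable (mem e v)] : Matrix E V ℝ :=
  Matrix.of fun e v => if mem e v then 1 else 0

/-- Vertex switching at `w`: negate all incidence signs at the vertex `w`. -/
def vertexSwitch [DecidableEq V] (M : Matrix E V ℝ) (w : V) : Matrix E V ℝ :=
  Matrix.of fun e v => if v = w then -M e v else M e v

/-- Edge switching at `f`: negate all incidence signs of the edge `f`. -/
def edgeSwitch [DecidableEq E] (M : Matrix E V ℝ) (f : E) : Matrix E V ℝ :=
  Matrix.of fun e v => if e = f then -M e v else M e v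

/-- One switching step: a single vertex switching or a single edge switching. -/
def SwitchStep [DecidableEq V] [DecidableEq E] (M N : Matrix E V ℝ) : Prop :=
  (∃ w, N = vertexSwitch M w) ∨ (∃ f, N = edgeSwitch M f)

/-- Switching equivalence: a finite sequence of vertex and/or edge switchings. -/
def SwitchEquiv [DecidableEq V] [DecidableEq E] : Matrix E V ℝ → Matrix E V ℝ → Prop :=
  Relation.ReflTransGen SwitchStep

/-- Incidence balance: there is a bipartition `{X, Xᶜ}` of the vertices such that every edge
intersects one part exactly in its positively incident vertices and the other part exactly in
its negatively incident vertices (the roles of the parts may vary edge by edge). -/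
def IncBalanced (mem : E → V → Prop) (M : Matrix E V ℝ) : Prop :=
  ∃ X : V → Prop, ∀ e,
    (∀ v, mem e v → (M e v = 1 ↔ X v)) ∨ (∀ v, mem e v → (M e v = 1 ↔ ¬ X v))

/-- The adjacency matrix of an oriented hypergraph:
`a u v = ∑_{e ∋ u,v} σ(e,u)σ(e,v)` for `u ≠ v` and `0` on the diagonal. -/
def adjMat [Fintype E] [DecidableEq V] (M : Matrix E V ℝ) : Matrix V V ℝ :=
  Matrix.of fun u v => if u = v then 0 else ∑ e, M e u * M e v

/-- The diagonal matrix of vertex degrees. -/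
def degMat [Fintype E] [DecidableEq V] (mem : E → V → Prop) [∀ e v, Decidable (mem e v)] :
    Matrix V V ℝ :=
  Matrix.diagonal fun v => ((Finset.univ.filter fun e => mem e v).card : ℝ)

/-- `μ` is a (real) eigenvalue of the real matrix `A`. -/
def IsEigenvalue {n : Type*} [Fintype n] (A : Matrix n n ℝ) (μ : ℝ) : Prop :=
  ∃ x : n → ℝ, x ≠ 0 ∧ A.mulVec x = μ • x

/-- `μ` is a complex eigenvalue of the real matrix `A`. -/
def IsEigenvalueC {n : Type*} [Fintype n] (A : Matrix n n ℝ) (μ : ℂ) : Prop :=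
  ∃ x : n → ℂ, x ≠ 0 ∧ (A.map fun a => (a : ℂ)).mulVec x = μ • x

/-- Spectral radius: the maximum modulus of the (complex) eigenvalues of `A`. -/
noncomputable def specRad {n : Type*} [Fintype n] (A : Matrix n n ℝ) : ℝ :=
  sSup {r | ∃ μ : ℂ, IsEigenvalueC A μ ∧ r = ‖μ‖}

/-- `s` is a singular value of `M`, i.e. a square root of an eigenvalue of `Mᵀ M`. -/
def IsSingularValue [Fintype V] [Fintype E] (M : Matrix E V ℝ) (s : ℝ) : Prop :=
  0 ≤ s ∧ IsEigenvalue (Mᵀ * M) (s ^ 2)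

/-- The maximum singular value of `M`. -/
noncomputable def maxSingularValue [Fintype V] [Fintype E] (M : Matrix E V ℝ) : ℝ :=
  sSup {s | IsSingularValue M s}

/-- The (bipartite) incidence graph of a hypergraph, on vertex set `V ⊕ E`, with an edge
joining `v` and `e` for each incidence `(e, v)`. -/
def incGraph (mem : E → V → Prop) : SimpleGraph (V ⊕ E) where
  Adj x y := (∃ v e, x = Sum.inl v ∧ y = Sum.inr e ∧ mem e v) ∨
             (∃ v e, x = Sum.inr e ∧ y = Sum.inl v ∧ mem e v)
  symm := by
    constructor
    rintro x y (⟨v, e, h1, h2, h3⟩ | ⟨v, e, h1, h2, h3⟩)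
    · exact Or.inr ⟨v, e, h2, h1, h3⟩
    · exact Or.inl ⟨v, e, h2, h1, h3⟩
  loopless := by
    constructor
    rintro x (⟨v, e, h1, h2, h3⟩ | ⟨v, e, h1, h2, h3⟩) <;> subst h1 <;> simp at h2

/-- A hypergraph is connected if any two elements of `V ∪ E` are joined by a walk,
i.e. its incidence graph is connected. -/
def HConnected (mem : E → V → Prop) : Prop := (incGraph mem).Connected

/-- The sign of an incidence, viewed as an edge of the incidence graph. -/
def pairSign (M : Matrix E V ℝ) : V ⊕ E → V ⊕ E → ℝ
  | Sum.inl v, Sum.inr e => M e v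
  | Sum.inr e, Sum.inl v => M e v
  | _, _ => 1

/-- The incidence sign of a walk (in particular of a path or a cycle) of the oriented
hypergraph, realized as a walk of the incidence graph: the product of the signs of the
incidences traversed. -/
def walkSign {mem : E → V → Prop} (M : Matrix E V ℝ) {x y : V ⊕ E}
    (w : (incGraph mem).Walk x y) : ℝ :=
  (w.darts.map fun d => pairSign M d.toProd.1 d.toProd.2).prod

/-- A signed graph (a graph `G` together with edge signs `sgn`) is balanced if every cycle
has positive sign product. -/
def SignedGraphBalanced {α : Type*} (G : SimpleGraph α) (sgn : α → α → ℝ) : Prop :=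
  ∀ (x : α) (w : G.Walk x x), w.IsCycle →
    (w.darts.map fun d => sgn d.toProd.1 d.toProd.2).prod = 1

/-!
Both conditions say that `σ` is switching-trivial: `σ(e, v) = θ v * θ e` on every incidence for
some `θ : V ⊕ E → {±1}`. For incidence balance, `θ` is the `±1`-indicator of `X` on vertices and
records on each edge which of the two alternatives holds. For the signed incidence graph this is
Harary's criterion: given `θ`, the sign of a closed walk telescopes to `θ x ^ 2 = 1`; conversely,
if all cycles are positive then so is every closed walk (its sign equals that of its bypass,
because each closed piece the bypass cuts off is a cycle or a backtrack), and `θ a` is the sign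
of any walk to `a` from a fixed base point of its component.
-/

namespace SimpleGraph.Walk

variable {α : Type*} {G : SimpleGraph α} (sgn : α → α → ℝ)

def sign {x y : α} (w : G.Walk x y) : ℝ :=
  (w.darts.map fun d => sgn d.toProd.1 d.toProd.2).prod

@[simp] lemma sign_nil {x : α} : (nil : G.Walk x x).sign sgn = 1 := rfl

@[simp] lemma sign_cons {x y z : α} (h : G.Adj x y) (p : G.Walk y z) :
    (cons h p).sign sgn = sgn x y * p.sign sgn := by
  simp [sign]

@[simp] lemma sign_append {x y z : α} (p : G.Walk x y) (q : G.Walk y z) :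
    (p.append q).sign sgn = p.sign sgn * q.sign sgn := by
  simp [sign, darts_append]

@[simp] lemma sign_copy {x y x' y' : α} (p : G.Walk x y) (hx : x = x') (hy : y = y') :
    (p.copy hx hy).sign sgn = p.sign sgn := by
  subst hx hy
  rfl

lemma sign_reverse (hsymm : ∀ a b, sgn a b = sgn b a) {x y : α} (p : G.Walk x y) :
    p.reverse.sign sgn = p.sign sgn := by
  induction p with
  | nil => rfl
  | cons h p ih => rw [reverse_cons, sign_append, ih, sign_cons, sign_cons, hsymm, sign_nil,
      mul_one, mul_comm]

lemma sign_eq_one_or_neg_one (hpm : ∀ a b, G.Adj a b → sgn a b = 1 ∨ sgn a b = -1)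
    {x y : α} (p : G.Walk x y) : p.sign sgn = 1 ∨ p.sign sgn = -1 := by
  induction p with
  | nil => simp
  | cons h p ih => rcases hpm _ _ h with h1 | h1 <;> rcases ih with h2 | h2 <;> simp [h1, h2]

lemma sign_eq_mul_of_potential {θ : α → ℝ} (hθ : ∀ a, θ a * θ a = 1)
    (hsgn : ∀ a b, G.Adj a b → sgn a b = θ a * θ b) {x y : α} (p : G.Walk x y) :
    p.sign sgn = θ x * θ y := by
  induction p with
  | nil => exact (hθ _).symm
  | @cons x z y h p ih =>
    rw [sign_cons, ih, hsgn x z h]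
    linear_combination θ x * θ y * hθ z

lemma IsPath.eq_cons_nil_of_mem_edges {u v : α} {q : G.Walk v u} (hq : q.IsPath)
    (h : G.Adj v u) (he : s(u, v) ∈ q.edges) : q = cons h .nil := by
  cases q with
  | nil => simp at he
  | @cons _ w _ h' r =>
    rw [cons_isPath_iff] at hq
    rcases List.mem_cons.mp he with he | he
    · obtain ⟨rfl, -⟩ | ⟨rfl, -⟩ := Sym2.eq_iff.mp he
      · exact absurd rfl h.ne
      · rw [eq_nil_iff_nil.mpr (isPath_iff_nil.mp hq.1)]
    · exact absurd (r.snd_mem_support_of_mem_edges he) hq.2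

section Balanced

variable {sgn} (hsymm : ∀ a b, sgn a b = sgn b a)
  (hpm : ∀ a b, G.Adj a b → sgn a b = 1 ∨ sgn a b = -1) (hbal : SignedGraphBalanced G sgn)
include hsymm hpm hbal

lemma sign_cons_eq_one_of_isPath {u v : α} (h : G.Adj u v) {q : G.Walk v u} (hq : q.IsPath) :
    (cons h q).sign sgn = 1 := by
  by_cases hc : (cons h q).IsCycle
  · exact hbal u _ hc
  · have he : s(u, v) ∈ q.edges := by simpa [cons_isCycle_iff, hq] using hc
    rw [hq.eq_cons_nil_of_mem_edges h.symm he, sign_cons, sign_cons, sign_nil, mul_one,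
      hsymm v u, mul_self_eq_one_iff.mpr (hpm u v h)]

lemma sign_bypass [DecidableEq α] {x y : α} (p : G.Walk x y) :
    p.bypass.sign sgn = p.sign sgn := by
  induction p with
  | nil => rfl
  | cons h p ih =>
    rw [bypass]
    split_ifs with hu
    · have hsplit := congrArg (sign sgn) (p.bypass.take_spec hu)
      have hloop := sign_cons_eq_one_of_isPath hsymm hpm hbal h
        ((bypass_isPath p).takeUntil hu)
      rw [sign_append] at hsplit
      rw [sign_cons] at hloop
      rw [sign_cons, ← ih, ← hsplit, ← mul_assoc, hloop, one_mul]
    · rw [sign_cons, sign_cons, ih]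

lemma sign_eq_one_of_closed [DecidableEq α] {x : α} (w : G.Walk x x) : w.sign sgn = 1 := by
  rw [← sign_bypass hsymm hpm hbal, eq_nil_iff_nil.mpr (isPath_iff_nil.mp (bypass_isPath w)),
    sign_nil]

end Balanced

end SimpleGraph.Walk

open SimpleGraph

theorem signedGraphBalanced_iff_exists_switching {α : Type*} {G : SimpleGraph α}
    {sgn : α → α → ℝ} (hsymm : ∀ a b, sgn a b = sgn b a)
    (hpm : ∀ a b, G.Adj a b → sgn a b = 1 ∨ sgn a b = -1) :
    SignedGraphBalanced G sgn ↔
      ∃ θ : α → ℝ, (∀ a, θ a = 1 ∨ θ a = -1) ∧ ∀ a b, G.Adj a b → sgn a b = θ a * θ b := by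
  classical
  constructor
  · intro hbal
    have hreach (a : α) : G.Reachable (G.connectedComponentMk a).out a :=
      ConnectedComponent.exact (G.connectedComponentMk a).out_eq
    let θ : α → ℝ := fun a => (hreach a).some.sign sgn
    have hθpm (a : α) : θ a = 1 ∨ θ a = -1 := Walk.sign_eq_one_or_neg_one sgn hpm _
    refine ⟨θ, hθpm, fun a b hab => ?_⟩
    have hbase : (G.connectedComponentMk b).out = (G.connectedComponentMk a).out := by
      rw [ConnectedComponent.sound hab.reachable]
    have hloop := Walk.sign_eq_one_of_closed hsymm hpm hbal
      ((hreach a).some.append (.cons hab ((hreach b).some.reverse.copy rfl hbase)))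
    rw [Walk.sign_append, Walk.sign_cons, Walk.sign_copy, Walk.sign_reverse sgn hsymm]
      at hloop
    change θ a * (sgn a b * θ b) = 1 at hloop
    have ha := mul_self_eq_one_iff.mpr (hθpm a)
    have hb := mul_self_eq_one_iff.mpr (hθpm b)
    linear_combination θ a * θ b * hloop - sgn a b * θ b * θ b * ha - sgn a b * hb
  · rintro ⟨θ, hθ, hsgn⟩ x w -
    have hθsq (a : α) : θ a * θ a = 1 := mul_self_eq_one_iff.mpr (hθ a)
    exact (Walk.sign_eq_mul_of_potential sgn hθsq hsgn w).trans (hθsq x)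

lemma pairSign_symm (M : Matrix E V ℝ) (a b : V ⊕ E) : pairSign M a b = pairSign M b a := by
  rcases a with v | e <;> rcases b with w | f <;> rfl

section Incidence

variable {mem : E → V → Prop} {M : Matrix E V ℝ}

lemma forall_incGraph_adj_iff {θ : V ⊕ E → ℝ} :
    (∀ a b, (incGraph mem).Adj a b → pairSign M a b = θ a * θ b) ↔
      ∀ e v, mem e v → M e v = θ (.inl v) * θ (.inr e) := by
  constructor
  · exact fun h e v hv => h _ _ (Or.inl ⟨v, e, rfl, rfl, hv⟩)
  · rintro h a b (⟨v, e, rfl, rfl, hv⟩ | ⟨v, e, rfl, rfl, hv⟩)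
    · exact h e v hv
    · exact (h e v hv).trans (mul_comm _ _)

lemma IsOrientation.pairSign_eq_one_or_neg_one (hM : IsOrientation mem M) (a b : V ⊕ E)
    (hab : (incGraph mem).Adj a b) : pairSign M a b = 1 ∨ pairSign M a b = -1 := by
  rcases hab with ⟨v, e, rfl, rfl, hv⟩ | ⟨v, e, rfl, rfl, hv⟩ <;> exact (hM e v).1 hv

lemma eq_ite_of_eq_one_iff {s : ℝ} {P : Prop} [Decidable P] (hs : s = 1 ∨ s = -1)
    (h : s = 1 ↔ P) : s = if P then 1 else -1 := by
  split_ifs with hP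
  · exact h.mpr hP
  · exact hs.resolve_left (mt h.mp hP)

lemma IsOrientation.incBalanced_iff_exists_switching (hM : IsOrientation mem M) :
    IncBalanced mem M ↔ ∃ θ : V ⊕ E → ℝ, (∀ a, θ a = 1 ∨ θ a = -1) ∧
      ∀ e v, mem e v → M e v = θ (.inl v) * θ (.inr e) := by
  classical
  constructor
  · rintro ⟨X, hX⟩
    refine ⟨Sum.elim (fun v => if X v then 1 else -1)
      (fun e => if ∀ v, mem e v → (M e v = 1 ↔ X v) then 1 else -1), ?_, fun e v hv => ?_⟩
    · rintro (v | e) <;> simp only [Sum.elim_inl, Sum.elim_inr] <;> split_ifs <;> simp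
    · have hs := (hM e v).1 hv
      by_cases he : ∀ v, mem e v → (M e v = 1 ↔ X v)
      · rw [Sum.elim_inr, if_pos he, mul_one, Sum.elim_inl]
        exact eq_ite_of_eq_one_iff hs (he v hv)
      · rw [Sum.elim_inr, if_neg he, Sum.elim_inl,
          eq_ite_of_eq_one_iff hs ((hX e).resolve_left he v hv)]
        split_ifs <;> norm_num
  · rintro ⟨θ, hθ, hθM⟩
    refine ⟨fun v => θ (.inl v) = 1, fun e => ?_⟩
    rcases hθ (.inr e) with he | he
    · exact Or.inl fun v hv => by rw [hθM e v hv, he, mul_one]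
    · refine Or.inr fun v hv => ?_
      rw [hθM e v hv, he]
      rcases hθ (.inl v) with h | h <;> norm_num [h]

end Incidence

/-- `G^σ` is incidence balanced iff its signed incidence graph `IG^σ`
is a balanced signed graph. -/
theorem incBalanced_iff_incidenceGraph_balanced
    (mem : E → V → Prop) (M : Matrix E V ℝ) (hM : IsOrientation mem M) :
    IncBalanced mem M ↔ SignedGraphBalanced (incGraph mem) (pairSign M) := by
  rw [signedGraphBalanced_iff_exists_switching (pairSign_symm M) hM.pairSign_eq_one_or_neg_one,
    hM.incBalanced_iff_exists_switching]
  simp_rw [forall_incGraph_adj_iff]
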